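/- arXiv:2303.10208 — 2 statements merged into one kernel-verified Lean document; each statement's English description precedes it below -/
import Mathlib

section
/- A subset P of [0,1]ⁿ is the common zeroset of a finite set of homogeneous normal-form McNaughton functions if and only if P is a finite union of rational cones passing through the origin, i.e., a finite union of sets of the form [0,1]ⁿ ∩ ⋂_{j∈J} {x ∈ ℝⁿ | aⱼ·x ≤ 0} with J finite and each aⱼ ∈ ℤⁿ. -/
/-- The truncation function `ρ(y) = max(0, min(1, y))`. -/
noncomputable def rho (y : ℝ) : ℝ := max 0 (min 1 y)

/-- The unit hypercube `[0,1]ⁿ` inside `ℝⁿ`. -/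
def unitCube (n : ℕ) : Set (Fin n → ℝ) := {x | ∀ t, x t ∈ Set.Icc (0 : ℝ) 1}

/-- The normal-form McNaughton function
`φ(x) = min_i max_j ρ(aᵢⱼ·x + bᵢⱼ)` with integer data `a`, `b`. -/
noncomputable def mcN (n k : ℕ) (m : Fin (k + 1) → ℕ)
    (a : (i : Fin (k + 1)) → Fin (m i + 1) → Fin n → ℤ)
    (b : (i : Fin (k + 1)) → Fin (m i + 1) → ℤ) (x : Fin n → ℝ) : ℝ :=
  Finset.univ.inf' Finset.univ_nonempty fun i =>
    Finset.univ.sup' Finset.univ_nonempty fun j =>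
      rho ((∑ t, (a i j t : ℝ) * x t) + (b i j : ℝ))

/-- The zeroset of a normal-form McNaughton function on `[0,1]ⁿ`. -/
def zset (n k : ℕ) (m : Fin (k + 1) → ℕ)
    (a : (i : Fin (k + 1)) → Fin (m i + 1) → Fin n → ℤ)
    (b : (i : Fin (k + 1)) → Fin (m i + 1) → ℤ) : Set (Fin n → ℝ) :=
  {x ∈ unitCube n | mcN n k m a b x = 0}

lemma rho_nonneg (y : ℝ) : 0 ≤ rho y := le_max_left _ _

lemma rho_eq_zero_iff (y : ℝ) : rho y = 0 ↔ y ≤ 0 := by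
  unfold rho
  constructor
  · intro h
    by_contra hy
    push_neg at hy
    have h1 : 0 < min 1 y := lt_min one_pos hy
    rw [max_eq_right h1.le] at h
    linarith
  · intro h
    rw [max_eq_left (min_le_of_right_le h)]

lemma mcN_zero_iff (n k : ℕ) (m : Fin (k + 1) → ℕ)
    (a : (i : Fin (k + 1)) → Fin (m i + 1) → Fin n → ℤ) (x : Fin n → ℝ) :
    mcN n k m a (fun _ _ => 0) x = 0 ↔
      ∃ i, ∀ j, (∑ t, (a i j t : ℝ) * x t) ≤ 0 := by
  unfold mcN
  constructor
  · intro h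
    obtain ⟨i, -, hi⟩ := Finset.exists_mem_eq_inf' (Finset.univ_nonempty)
      (fun i => Finset.univ.sup' Finset.univ_nonempty fun j =>
        rho ((∑ t, (a i j t : ℝ) * x t) + (((fun _ _ => (0:ℤ)) i j : ℤ) : ℝ)))
    refine ⟨i, fun j => ?_⟩
    have hsup : (Finset.univ.sup' Finset.univ_nonempty fun j =>
        rho ((∑ t, (a i j t : ℝ) * x t) + (((fun _ _ => (0:ℤ)) i j : ℤ) : ℝ))) = 0 := by
      rw [← hi]; exact h
    have hle : rho ((∑ t, (a i j t : ℝ) * x t) + (((fun _ _ => (0:ℤ)) i j : ℤ) : ℝ)) ≤ 0 :=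
      hsup ▸ Finset.le_sup' (f := fun j =>
        rho ((∑ t, (a i j t : ℝ) * x t) + (((fun _ _ => (0:ℤ)) i j : ℤ) : ℝ)))
        (Finset.mem_univ j)
    have := (rho_eq_zero_iff _).mp (le_antisymm hle (rho_nonneg _))
    simpa using this
  · rintro ⟨i, hi⟩
    apply le_antisymm
    · refine le_trans (Finset.inf'_le _ (Finset.mem_univ i)) ?_
      apply Finset.sup'_le
      intro j _
      rw [(rho_eq_zero_iff _).mpr (by simpa using hi j)]
    · apply Finset.le_inf'
      intro i' _
      exact le_trans (rho_nonneg _) (Finset.le_sup' (f := fun j =>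
        rho ((∑ t, (a i' j t : ℝ) * x t) + (((fun _ _ => (0:ℤ)) i' j : ℤ) : ℝ)))
        (Finset.mem_univ 0))

lemma zset_eq (n k : ℕ) (m : Fin (k + 1) → ℕ)
    (a : (i : Fin (k + 1)) → Fin (m i + 1) → Fin n → ℤ) :
    zset n k m a (fun _ _ => 0) =
      unitCube n ∩ ⋃ i, ⋂ j, {x : Fin n → ℝ | (∑ t, (a i j t : ℝ) * x t) ≤ 0} := by
  ext x
  simp only [zset, Set.mem_setOf_eq, Set.mem_inter_iff, Set.mem_iUnion, Set.mem_iInter,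
    mcN_zero_iff, Set.mem_sep_iff]

lemma iInter_iUnion_eq {α : Type*} {ι : Type*} [Nonempty ι] {κ : ι → Type*}
    (S : ∀ i, κ i → Set α) :
    (⋂ i, ⋃ j, S i j) = ⋃ f : ∀ i, κ i, ⋂ i, S i (f i) := by
  ext x
  simp only [Set.mem_iInter, Set.mem_iUnion]
  exact Classical.skolem

lemma iInter_card_sigma {α : Type*} {ι : Type*} [Fintype ι] [DecidableEq ι]
    {κ : ι → Type*} [∀ i, Fintype (κ i)] (S : ∀ i, κ i → Set α) :
    (⋂ j : Fin (Fintype.card (Σ i, κ i)),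
        S ((Fintype.equivFin (Σ i, κ i)).symm j).1 ((Fintype.equivFin (Σ i, κ i)).symm j).2) =
      ⋂ i, ⋂ j, S i j :=
  ((Fintype.equivFin (Σ i, κ i)).symm.surjective.iInter_comp
    fun p : Σ i, κ i => S p.1 p.2).trans (Set.iInter_sigma _)

theorem stmt9 (n : ℕ) (P : Set (Fin n → ℝ)) :
    (∃ (K : ℕ) (k : Fin (K + 1) → ℕ)
        (m : (t : Fin (K + 1)) → Fin (k t + 1) → ℕ)
        (a : (t : Fin (K + 1)) → (i : Fin (k t + 1)) → Fin (m t i + 1) → Fin n → ℤ),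
      P = ⋂ t, zset n (k t) (m t) (a t) (fun _ _ => 0)) ↔
    (∃ (u : ℕ) (c : Fin (u + 1) → ℕ)
        (a : (s : Fin (u + 1)) → Fin (c s) → Fin n → ℤ),
      P = ⋃ s, (unitCube n ∩ ⋂ j, {x : Fin n → ℝ | (∑ t, (a s j t : ℝ) * x t) ≤ 0})) := by
  constructor
  · rintro ⟨K, k, m, a, rfl⟩
    have h1 : (⋂ t, zset n (k t) (m t) (a t) (fun _ _ => 0)) =
        unitCube n ∩ ⋂ t, ⋃ i, ⋂ j, {x : Fin n → ℝ | (∑ r, (a t i j r : ℝ) * x r) ≤ 0} := by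
      simp only [zset_eq]
      ext x
      simp only [Set.mem_iInter, Set.mem_inter_iff]
      rw [forall_and]
      simp
    rw [h1, iInter_iUnion_eq, Set.inter_iUnion]
    have hcard : 0 < Fintype.card (∀ t : Fin (K + 1), Fin (k t + 1)) := Fintype.card_pos
    obtain ⟨e⟩ : Nonempty (Fin (Fintype.card (∀ t : Fin (K + 1), Fin (k t + 1)) - 1 + 1) ≃
        (∀ t : Fin (K + 1), Fin (k t + 1))) :=
      ⟨(finCongr (Nat.succ_pred_eq_of_pos hcard)).trans (Fintype.equivFin _).symm⟩
    refine ⟨Fintype.card (∀ t : Fin (K + 1), Fin (k t + 1)) - 1,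
      fun s => Fintype.card (Σ t : Fin (K + 1), Fin (m t (e s t) + 1)),
      fun s j =>
        a ((Fintype.equivFin (Σ t : Fin (K + 1), Fin (m t (e s t) + 1))).symm j).1
          (e s ((Fintype.equivFin (Σ t : Fin (K + 1), Fin (m t (e s t) + 1))).symm j).1)
          ((Fintype.equivFin (Σ t : Fin (K + 1), Fin (m t (e s t) + 1))).symm j).2, ?_⟩
    rw [← e.surjective.iUnion_comp (fun f => unitCube n ∩
      ⋂ t, ⋂ j, {x : Fin n → ℝ | (∑ r, (a t (f t) j r : ℝ) * x r) ≤ 0})]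
    apply Set.iUnion_congr
    intro s
    congr 1
    exact (iInter_card_sigma (κ := fun t : Fin (K + 1) => Fin (m t (e s t) + 1))
      (fun t j => {x : Fin n → ℝ | (∑ r, (a t (e s t) j r : ℝ) * x r) ≤ 0})).symm
  · rintro ⟨u, c, a, rfl⟩
    refine ⟨0, fun _ => u, fun _ i => c i,
      fun _ i j => if h : (j : ℕ) < c i then a i ⟨j, h⟩ else 0, ?_⟩
    rw [Set.iInter_const, zset_eq, Set.inter_iUnion]
    apply Set.iUnion_congr
    intro i
    congr 1
    ext x
    simp only [Set.mem_iInter, Set.mem_setOf_eq]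
    constructor
    · intro h j
      by_cases hj : (j : ℕ) < c i
      · rw [dif_pos hj]
        exact h ⟨j, hj⟩
      · rw [dif_neg hj]
        simp
    · intro h j
      have h2 := h ⟨j, Nat.lt_succ_of_lt j.2⟩
      rw [dif_pos (show ((⟨(j : ℕ), Nat.lt_succ_of_lt j.2⟩ : Fin (c i + 1)) : ℕ) < c i from j.2)] at h2
      simpa using h2
end

section
/- A normal-form McNaughton function φ(x) = min_{i∈I} max_{j∈Jᵢ} ρ(aᵢⱼ·x + bᵢⱼ) on [0,1]ⁿ is locally homogeneous in zero if and only if φ(0) = 0. -/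
/-- `φ` is locally homogeneous in zero: there is a neighborhood `U` of `0`
in `[0,1]ⁿ` such that `φ(N·x) = N·φ(x)` whenever `x ∈ U` and `N·x ∈ U`. -/
def LocHomZero (n : ℕ) (φ : (Fin n → ℝ) → ℝ) : Prop :=
  ∃ U : Set (Fin n → ℝ), U ⊆ unitCube n ∧ U ∈ nhdsWithin 0 (unitCube n) ∧
    ∀ (N : ℕ) (x : Fin n → ℝ), x ∈ U → (fun t => (N : ℝ) * x t) ∈ U →
      φ (fun t => (N : ℝ) * x t) = (N : ℝ) * φ x

/-!
Near `0` every linear form `aᵢⱼ·x` has absolute value below `1/2`. There a term with `bᵢⱼ ≥ 1`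
exceeds `1/2`, a term with `bᵢⱼ ≤ -1` vanishes, and a term with `bᵢⱼ = 0` equals `max 0 (aᵢⱼ·x)`.
If `φ(0) = 0`, some row has all `bᵢⱼ ≤ 0`; such rows stay below `1/2`, so the rows containing a
positive constant never attain the minimum, and near `0` the function `φ` is a min of maxes of
the positively homogeneous functions `max 0 (aᵢⱼ·x)` and `0`. Conversely, homogeneity at `x = 0`
with `N = 2` forces `φ(0) = 2 φ(0)`.
-/

open Finset Filter Topology Matrix

lemma rho_add_intCast_of_nonpos {b : ℤ} (hb : b ≤ 0) {y : ℝ} (hy : y ≤ 1) :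
    rho (y + b) = if b = 0 then max 0 y else 0 := by
  unfold rho
  split_ifs with h
  · simp [h, min_eq_right hy]
  · have hb' : (b : ℝ) ≤ -1 := by exact_mod_cast (by omega : b ≤ -1)
    exact max_eq_left ((min_le_right _ _).trans (by linarith))

lemma rho_add_intCast_lt_half {b : ℤ} (hb : b ≤ 0) {y : ℝ} (hy : y < 1 / 2) :
    rho (y + b) < 1 / 2 := by
  have hb' : (b : ℝ) ≤ 0 := by exact_mod_cast hb
  exact max_lt (by norm_num) ((min_le_right _ _).trans_lt (by linarith))

lemma half_lt_rho_add_intCast {b : ℤ} (hb : 0 < b) {y : ℝ} (hy : -(1 / 2) < y) :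
    1 / 2 < rho (y + b) := by
  have hb' : (1 : ℝ) ≤ b := by exact_mod_cast hb
  exact lt_max_of_lt_right (lt_min (by norm_num) (by linarith))

lemma rho_mul_add_intCast_of_nonpos {b : ℤ} (hb : b ≤ 0) {c y : ℝ} (hc : 0 ≤ c) (hy : y ≤ 1)
    (hcy : c * y ≤ 1) : rho (c * y + b) = c * rho (y + b) := by
  rw [rho_add_intCast_of_nonpos hb hy, rho_add_intCast_of_nonpos hb hcy]
  split_ifs <;> simp [mul_max_of_nonneg _ _ hc]

lemma eventually_abs_dotProduct_lt {ι : Type*} [Fintype ι] (v : ι → ℝ) {ε : ℝ} (hε : 0 < ε) :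
    ∀ᶠ x in 𝓝 0, |v ⬝ᵥ x| < ε :=
  (continuous_const.dotProduct continuous_id).abs.continuousAt.eventually_lt continuousAt_const
    (by simpa using hε)

section Row

variable {n : ℕ} {ι : Type*} [Fintype ι] [Nonempty ι] (a : ι → Fin n → ℤ) (b : ι → ℤ)

noncomputable def rowMax (x : Fin n → ℝ) : ℝ :=
  univ.sup' univ_nonempty fun j => rho ((fun t => (a j t : ℝ)) ⬝ᵥ x + b j)

variable {a b}

lemma rowMax_lt_half (hb : ∀ j, b j ≤ 0) {x : Fin n → ℝ}
    (hx : ∀ j, (fun t => (a j t : ℝ)) ⬝ᵥ x < 1 / 2) : rowMax a b x < 1 / 2 :=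
  (sup'_lt_iff _).2 fun j _ => rho_add_intCast_lt_half (hb j) (hx j)

lemma half_lt_rowMax {j : ι} (hb : 0 < b j) {x : Fin n → ℝ}
    (hx : -(1 / 2) < (fun t => (a j t : ℝ)) ⬝ᵥ x) : 1 / 2 < rowMax a b x :=
  (lt_sup'_iff _).2 ⟨j, mem_univ j, half_lt_rho_add_intCast hb hx⟩

lemma rowMax_smul (hb : ∀ j, b j ≤ 0) {c : ℝ} (hc : 0 ≤ c) {x : Fin n → ℝ}
    (hx : ∀ j, (fun t => (a j t : ℝ)) ⬝ᵥ x ≤ 1) (hcx : ∀ j, (fun t => (a j t : ℝ)) ⬝ᵥ (c • x) ≤ 1) :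
    rowMax a b (c • x) = c * rowMax a b x := by
  rw [rowMax, rowMax, mul₀_sup' hc]
  refine sup'_congr _ rfl fun j _ => ?_
  have hcxj := hcx j
  rw [dotProduct_smul, smul_eq_mul] at hcxj ⊢
  exact rho_mul_add_intCast_of_nonpos (hb j) hc (hx j) hcxj

end Row

section NormalForm

variable {n k : ℕ} {m : Fin (k + 1) → ℕ} {a : (i : Fin (k + 1)) → Fin (m i + 1) → Fin n → ℤ}
  {b : (i : Fin (k + 1)) → Fin (m i + 1) → ℤ}

lemma mcN_eq_inf'_rowMax (x : Fin n → ℝ) :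
    mcN n k m a b x = univ.inf' univ_nonempty fun i => rowMax (a i) (b i) x :=
  rfl

def nonposRows (b : (i : Fin (k + 1)) → Fin (m i + 1) → ℤ) : Finset (Fin (k + 1)) :=
  univ.filter fun i => ∀ j, b i j ≤ 0

lemma nonposRows_nonempty_of_mcN_zero (h : mcN n k m a b 0 = 0) : (nonposRows b).Nonempty := by
  obtain ⟨i, -, hi⟩ := exists_mem_eq_inf' univ_nonempty fun i => rowMax (a i) (b i) 0
  refine ⟨i, mem_filter.2 ⟨mem_univ i, fun j => ?_⟩⟩
  by_contra! hj
  have hrow := half_lt_rowMax (a := a i) hj (x := 0) (by norm_num)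
  rw [← hi, ← mcN_eq_inf'_rowMax, h] at hrow
  norm_num at hrow

lemma mcN_eq_inf'_nonposRows (hne : (nonposRows b).Nonempty) {x : Fin n → ℝ}
    (hx : ∀ i j, |(fun t => (a i j t : ℝ)) ⬝ᵥ x| < 1 / 2) :
    mcN n k m a b x = (nonposRows b).inf' hne fun i => rowMax (a i) (b i) x := by
  obtain ⟨i₀, hi₀⟩ := hne
  refine le_antisymm (inf'_mono _ (subset_univ _) _) (le_inf' _ _ fun i _ => ?_)
  by_cases hi : i ∈ nonposRows b
  · exact inf'_le _ hi
  obtain ⟨j, hj⟩ : ∃ j, 0 < b i j := by simpa [nonposRows] using hi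
  calc _ ≤ rowMax (a i₀) (b i₀) x := inf'_le _ hi₀
    _ ≤ 1 / 2 := (rowMax_lt_half (mem_filter.1 hi₀).2 fun j => (abs_lt.1 (hx i₀ j)).2).le
    _ ≤ rowMax (a i) (b i) x := (half_lt_rowMax hj (abs_lt.1 (hx i j)).1).le

lemma mcN_smul (hne : (nonposRows b).Nonempty) {c : ℝ} (hc : 0 ≤ c) {x : Fin n → ℝ}
    (hx : ∀ i j, |(fun t => (a i j t : ℝ)) ⬝ᵥ x| < 1 / 2)
    (hcx : ∀ i j, |(fun t => (a i j t : ℝ)) ⬝ᵥ (c • x)| < 1 / 2) :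
    mcN n k m a b (c • x) = c * mcN n k m a b x := by
  rw [mcN_eq_inf'_nonposRows hne hx, mcN_eq_inf'_nonposRows hne hcx,
    apply_inf'_eq_inf'_comp _ _ fun y z => mul_min_of_nonneg y z hc]
  refine inf'_congr _ rfl fun i hi => ?_
  exact rowMax_smul (mem_filter.1 hi).2 hc (fun j => by linarith [(abs_lt.1 (hx i j)).2])
    fun j => by linarith [(abs_lt.1 (hcx i j)).2]

lemma locHomZero_mcN (hne : (nonposRows b).Nonempty) : LocHomZero n (mcN n k m a b) := by
  have hV : ∀ᶠ x in 𝓝 (0 : Fin n → ℝ), ∀ i j, |(fun t => (a i j t : ℝ)) ⬝ᵥ x| < 1 / 2 :=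
    eventually_all.2 fun i => eventually_all.2 fun j =>
      eventually_abs_dotProduct_lt _ (by norm_num)
  refine ⟨unitCube n ∩ {x | ∀ i j, |(fun t => (a i j t : ℝ)) ⬝ᵥ x| < 1 / 2},
    Set.inter_subset_left, inter_mem_nhdsWithin _ hV, fun N x hx hNx => ?_⟩
  exact mcN_smul hne N.cast_nonneg hx.2 hNx.2

end NormalForm

lemma LocHomZero.apply_zero {n : ℕ} {φ : (Fin n → ℝ) → ℝ} (h : LocHomZero n φ) : φ 0 = 0 := by
  obtain ⟨U, -, hU, hhom⟩ := h
  have h0 : (0 : Fin n → ℝ) ∈ U := mem_of_mem_nhdsWithin (fun _ => ⟨le_rfl, zero_le_one⟩) hU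
  have h2x : (fun t => ((2 : ℕ) : ℝ) * (0 : Fin n → ℝ) t) = 0 := by
    ext
    simp
  have h2 := hhom 2 0 h0 (by rw [h2x]; exact h0)
  rw [h2x] at h2
  norm_num at h2
  linarith

/-- A normal-form McNaughton function is locally homogeneous in zero iff `φ(0) = 0`. -/
theorem stmt16 (n k : ℕ) (m : Fin (k + 1) → ℕ)
    (a : (i : Fin (k + 1)) → Fin (m i + 1) → Fin n → ℤ)
    (b : (i : Fin (k + 1)) → Fin (m i + 1) → ℤ) :
    LocHomZero n (mcN n k m a b) ↔ mcN n k m a b (fun _ => 0) = 0 :=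
  ⟨LocHomZero.apply_zero, fun h => locHomZero_mcN (nonposRows_nonempty_of_mcN_zero h)⟩
end
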